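/- If the GF dimension of a countable collection C of infinite languages over U is finite, then C can be uniformly generated with feedback. -/

import Mathlib

/-! STATEMENT 14: If the GF dimension of a countable collection C of infinite languages over U is finite, then C can be uniformly generated with feedback. -/

/-- A generator strategy in the feedback model: `query h x` is the membership query
`y_t` issued after receiving input `x_t` with history `h` of completed rounds, and
`out h x y a` is the output `z_t` after the answer `a_t` to the query. -/
structure FGen (U : Type) where
  query : List (U × U × Bool × U) → U → U
  out : List (U × U × Bool × U) → U → U → Bool → U

/-- An adversary strategy in the feedback model: `inp h` is the next input `x_t`,
and `ans h x y` is the yes/no answer `a_t` to the generator's query `y_t`. -/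
structure FAdv (U : Type) where
  inp : List (U × U × Bool × U) → U
  ans : List (U × U × Bool × U) → U → U → Bool

/-- The history of the first `t` completed rounds `(x_s, y_s, a_s, z_s)` of the
interaction between `Adv` and `Gen`. -/
def fRun {U : Type} (Adv : FAdv U) (Gen : FGen U) : ℕ → List (U × U × Bool × U)
  | 0 => []
  | t + 1 =>
      let h := fRun Adv Gen t
      let x := Adv.inp h
      let y := Gen.query h x
      let a := Adv.ans h x y
      h ++ [(x, y, a, Gen.out h x y a)]

/-- The input `x_t` of round `t` (0-indexed) of the transcript T(Adv, Gen). -/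
def fX {U : Type} (Adv : FAdv U) (Gen : FGen U) (t : ℕ) : U :=
  Adv.inp (fRun Adv Gen t)

/-- The generator's query `y_t` of round `t`. -/
def fY {U : Type} (Adv : FAdv U) (Gen : FGen U) (t : ℕ) : U :=
  Gen.query (fRun Adv Gen t) (fX Adv Gen t)

/-- The adversary's answer `a_t` of round `t`. -/
def fA {U : Type} (Adv : FAdv U) (Gen : FGen U) (t : ℕ) : Bool :=
  Adv.ans (fRun Adv Gen t) (fX Adv Gen t) (fY Adv Gen t)

/-- The generator's output `z_t` of round `t`. -/
def fZ {U : Type} (Adv : FAdv U) (Gen : FGen U) (t : ℕ) : U :=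
  Gen.out (fRun Adv Gen t) (fX Adv Gen t) (fY Adv Gen t) (fA Adv Gen t)

/-- `S_r`: the set of distinct inputs among the first `r` rounds. -/
def fS {U : Type} (Adv : FAdv U) (Gen : FGen U) (r : ℕ) : Set U :=
  fX Adv Gen '' {t | t < r}

/-- The adversary strategy `Adv` is consistent with the language `K` (against `Gen`):
the inputs form an enumeration of `K` and every answer is truthful for `K`. -/
def fConsistent {U : Type} (Adv : FAdv U) (Gen : FGen U) (K : Set U) : Prop :=
  (∀ t, fX Adv Gen t ∈ K) ∧ (∀ w ∈ K, ∃ t, fX Adv Gen t = w) ∧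
    ∀ t, fA Adv Gen t = true ↔ fY Adv Gen t ∈ K

/-- `C_r(T)`: the languages of `C` consistent with the transcript up to round `r`
(inputs belong to the language and all answers are truthful for it). -/
def fCons {U : Type} (C : Set (Set U)) (Adv : FAdv U) (Gen : FGen U) (r : ℕ) :
    Set (Set U) :=
  {Lang ∈ C | ∀ t < r, fX Adv Gen t ∈ Lang ∧ (fA Adv Gen t = true ↔ fY Adv Gen t ∈ Lang)}

/-- The effective intersection `E_r(T)`. -/
def fE {U : Type} (C : Set (Set U)) (Adv : FAdv U) (Gen : FGen U) (r : ℕ) : Set U :=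
  ⋂₀ fCons C Adv Gen r \ fS Adv Gen r

/-- The GF dimension of `C`: the supremum of all `d ∈ ℕ` such that for every
generator strategy there are `K ∈ C` and an adversary strategy consistent with `K`
whose transcript has a finite round `r ≥ d` with `|S_r| ≥ d` and `E_r(T) = ∅`. -/
noncomputable def gfDim {U : Type} (C : Set (Set U)) : ℕ∞ :=
  sSup {e : ℕ∞ | ∃ d : ℕ, e = (d : ℕ∞) ∧
    ∀ Gen : FGen U, ∃ K ∈ C, ∃ Adv : FAdv U,
      fConsistent Adv Gen K ∧
      ∃ r : ℕ, d ≤ r ∧ d ≤ (fS Adv Gen r).ncard ∧ fE C Adv Gen r = ∅}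

/-- `C` can be uniformly generated with feedback: some generator strategy `Gen` and
bound `t*` are such that against every adversary consistent with any `K ∈ C`, the
output of every round `t` with `|S_t| ≥ t*` lies in `K \ S_t` (here `S_t` counts the
inputs up to and including round `t`). -/
def UniformGenWithFeedback {U : Type} (C : Set (Set U)) : Prop :=
  ∃ Gen : FGen U, ∃ tstar : ℕ,
    ∀ K ∈ C, ∀ Adv : FAdv U, fConsistent Adv Gen K →
      ∀ t : ℕ, tstar ≤ (fS Adv Gen (t + 1)).ncard →
        fZ Adv Gen t ∈ K \ fS Adv Gen (t + 1)

/-!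
Finite GF dimension provides a `d` and a generator `G0` against which the effective intersection
`E_r` is nonempty as soon as `r ≥ d` and `|S_r| ≥ d`. The new generator asks the queries of `G0`,
recovered by replaying `G0` on the `(x, y, a)` part of its own history, and outputs a point of
`E_{t+1} ⊆ K \ S_{t+1}`. Any adversary against it becomes an adversary against `G0` with the same
`(x, y, a)` transcript, hence the same `S` and `E`; and `|S_{t+1}| ≤ t + 1` makes `r ≥ d` automatic.
-/

section Simulation

variable {U : Type}

def fRound (Adv : FAdv U) (Gen : FGen U) (t : ℕ) : U × U × Bool :=
  (fX Adv Gen t, fY Adv Gen t, fA Adv Gen t)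

def dropOutputs (h : List (U × U × Bool × U)) : List (U × U × Bool) :=
  h.map fun e => (e.1, e.2.1, e.2.2.1)

def replay (Gen : FGen U) (l : List (U × U × Bool)) : List (U × U × Bool × U) :=
  l.foldl (fun h e => h ++ [(e.1, e.2.1, e.2.2, Gen.out h e.1 e.2.1 e.2.2)]) []

def consistentLangs (C : Set (Set U)) (l : List (U × U × Bool)) : Set (Set U) :=
  {L ∈ C | ∀ e ∈ l, e.1 ∈ L ∧ (e.2.2 = true ↔ e.2.1 ∈ L)}

def effInter (C : Set (Set U)) (l : List (U × U × Bool)) : Set U :=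
  ⋂₀ consistentLangs C l \ {u | ∃ e ∈ l, e.1 = u}

lemma fRun_succ (Adv : FAdv U) (Gen : FGen U) (t : ℕ) :
    fRun Adv Gen (t + 1) =
      fRun Adv Gen t ++ [(fX Adv Gen t, fY Adv Gen t, fA Adv Gen t, fZ Adv Gen t)] :=
  rfl

lemma dropOutputs_fRun_succ (Adv : FAdv U) (Gen : FGen U) (t : ℕ) :
    dropOutputs (fRun Adv Gen (t + 1)) = dropOutputs (fRun Adv Gen t) ++ [fRound Adv Gen t] := by
  simp [dropOutputs, fRun_succ, fRound]

lemma dropOutputs_fRun (Adv : FAdv U) (Gen : FGen U) (t : ℕ) :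
    dropOutputs (fRun Adv Gen t) = (List.range t).map (fRound Adv Gen) := by
  induction t with
  | zero => rfl
  | succ t ih => rw [dropOutputs_fRun_succ, ih, List.range_succ, List.map_append, List.map_singleton]

lemma replay_append_singleton (Gen : FGen U) (l : List (U × U × Bool)) (x y : U) (a : Bool) :
    replay Gen (l ++ [(x, y, a)]) = replay Gen l ++ [(x, y, a, Gen.out (replay Gen l) x y a)] := by
  simp [replay, List.foldl_append]

lemma replay_dropOutputs_fRun (Adv : FAdv U) (Gen : FGen U) (t : ℕ) :
    replay Gen (dropOutputs (fRun Adv Gen t)) = fRun Adv Gen t := by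
  induction t with
  | zero => rfl
  | succ t ih => rw [dropOutputs_fRun_succ, fRound, replay_append_singleton, ih, fRun_succ]; rfl

lemma fS_eq_inputs (Adv : FAdv U) (Gen : FGen U) (r : ℕ) :
    fS Adv Gen r = {u | ∃ e ∈ dropOutputs (fRun Adv Gen r), e.1 = u} := by
  ext u
  simp [fS, dropOutputs_fRun, fRound]

lemma fE_eq_effInter (C : Set (Set U)) (Adv : FAdv U) (Gen : FGen U) (r : ℕ) :
    fE C Adv Gen r = effInter C (dropOutputs (fRun Adv Gen r)) := by
  have hcons : fCons C Adv Gen r = consistentLangs C (dropOutputs (fRun Adv Gen r)) := by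
    ext L
    simp [fCons, consistentLangs, dropOutputs_fRun, fRound]
  rw [fE, effInter, hcons, fS_eq_inputs]

lemma fS_ncard_le (Adv : FAdv U) (Gen : FGen U) (r : ℕ) : (fS Adv Gen r).ncard ≤ r :=
  (Set.ncard_image_le (Set.finite_Iio r)).trans (Set.ncard_Iio_nat r).le

lemma fE_subset_diff {C : Set (Set U)} {K : Set U} {Adv : FAdv U} {Gen : FGen U} (hK : K ∈ C)
    (hcons : fConsistent Adv Gen K) (r : ℕ) : fE C Adv Gen r ⊆ K \ fS Adv Gen r :=
  fun _ hu => ⟨hu.1 K ⟨hK, fun s _ => ⟨hcons.1 s, hcons.2.2 s⟩⟩, hu.2⟩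

section Congr

variable {Adv Adv' : FAdv U} {Gen Gen' : FGen U}

lemma fS_congr (h : fRound Adv Gen = fRound Adv' Gen') (r : ℕ) :
    fS Adv Gen r = fS Adv' Gen' r := by
  rw [fS_eq_inputs, fS_eq_inputs, dropOutputs_fRun, dropOutputs_fRun, h]

lemma fE_congr (C : Set (Set U)) (h : fRound Adv Gen = fRound Adv' Gen') (r : ℕ) :
    fE C Adv Gen r = fE C Adv' Gen' r := by
  rw [fE_eq_effInter, fE_eq_effInter, dropOutputs_fRun, dropOutputs_fRun, h]

lemma fConsistent_congr (K : Set U) (h : fRound Adv Gen = fRound Adv' Gen') :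
    fConsistent Adv Gen K ↔ fConsistent Adv' Gen' K := by
  have hx : fX Adv Gen = fX Adv' Gen' := congrArg (fun f s => (f s).1) h
  have hy : fY Adv Gen = fY Adv' Gen' := congrArg (fun f s => (f s).2.1) h
  have ha : fA Adv Gen = fA Adv' Gen' := congrArg (fun f s => (f s).2.2) h
  rw [fConsistent, fConsistent, hx, hy, ha]

end Congr

/-- Plays `Adv` against another generator, showing `Adv` the history it would have seen
against `Gen`. -/
def simAdv (Adv : FAdv U) (Gen : FGen U) : FAdv U where
  inp h := Adv.inp (replay Gen (dropOutputs h))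
  ans h x y := Adv.ans (replay Gen (dropOutputs h)) x y

lemma fRound_simAdv {Gen G0 : FGen U}
    (hquery : ∀ h x, Gen.query h x = G0.query (replay G0 (dropOutputs h)) x) (Adv : FAdv U) :
    fRound (simAdv Adv Gen) G0 = fRound Adv Gen := by
  have hrun : ∀ t, dropOutputs (fRun (simAdv Adv Gen) G0 t) = dropOutputs (fRun Adv Gen t) := by
    intro t
    induction t with
    | zero => rfl
    | succ t ih =>
      have hG0 : fRun (simAdv Adv Gen) G0 t = replay G0 (dropOutputs (fRun Adv Gen t)) := by
        rw [← ih, replay_dropOutputs_fRun]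
      have hGen : replay Gen (dropOutputs (fRun (simAdv Adv Gen) G0 t)) = fRun Adv Gen t := by
        rw [ih, replay_dropOutputs_fRun]
      have hx : fX (simAdv Adv Gen) G0 t = fX Adv Gen t := congrArg Adv.inp hGen
      have hy : fY (simAdv Adv Gen) G0 t = fY Adv Gen t := by
        show G0.query _ _ = Gen.query _ _
        rw [hx, hquery, hG0]
      have ha : fA (simAdv Adv Gen) G0 t = fA Adv Gen t := by
        show Adv.ans (replay Gen (dropOutputs _)) _ _ = Adv.ans _ _ _
        rw [hGen, hx, hy]
      rw [dropOutputs_fRun_succ, dropOutputs_fRun_succ, ih, fRound, fRound, hx, hy, ha]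
  funext t
  have := hrun (t + 1)
  rw [dropOutputs_fRun, dropOutputs_fRun, List.map_inj_left] at this
  exact this t (List.mem_range.2 t.lt_succ_self)

open Classical in
noncomputable def simGen (C : Set (Set U)) (G0 : FGen U) : FGen U where
  query h x := G0.query (replay G0 (dropOutputs h)) x
  out h x y a :=
    if hE : (effInter C (dropOutputs h ++ [(x, y, a)])).Nonempty then hE.some else x

lemma fZ_simGen_mem_fE {C : Set (Set U)} {G0 : FGen U} {Adv : FAdv U} {t : ℕ}
    (hE : (fE C Adv (simGen C G0) (t + 1)).Nonempty) :
    fZ Adv (simGen C G0) t ∈ fE C Adv (simGen C G0) (t + 1) := by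
  rw [fE_eq_effInter, dropOutputs_fRun_succ] at hE ⊢
  simp only [fZ, simGen, fRound] at hE ⊢
  rw [dif_pos hE]
  exact hE.some_mem

lemma exists_gen_fE_nonempty_of_gfDim_ne_top {C : Set (Set U)} (h : gfDim C ≠ ⊤) :
    ∃ (d : ℕ) (G0 : FGen U), ∀ K ∈ C, ∀ Adv : FAdv U, fConsistent Adv G0 K →
      ∀ r, d ≤ r → d ≤ (fS Adv G0 r).ncard → (fE C Adv G0 r).Nonempty := by
  by_contra! hall
  exact h (top_le_iff.1 (ENat.forall_natCast_le_iff_le.1 fun d _ => le_sSup ⟨d, rfl, hall d⟩))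

end Simulation

theorem gfDim_finite_implies_uniform_generation_with_feedback_general
    (U : Type)
    (C : Set (Set U))
    (h : gfDim C ≠ ⊤) :
    UniformGenWithFeedback C := by
  obtain ⟨d, G0, hG0⟩ := exists_gen_fE_nonempty_of_gfDim_ne_top h
  refine ⟨simGen C G0, d, fun K hK Adv hcons t hcard => ?_⟩
  have hround : fRound (simAdv Adv (simGen C G0)) G0 = fRound Adv (simGen C G0) :=
    fRound_simAdv (fun _ _ => rfl) Adv
  have hE : (fE C Adv (simGen C G0) (t + 1)).Nonempty := by
    rw [← fE_congr C hround]
    refine hG0 K hK _ ((fConsistent_congr K hround).2 hcons) (t + 1)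
      (hcard.trans (fS_ncard_le _ _ _)) ?_
    rwa [fS_congr hround]
  exact fE_subset_diff hK hcons (t + 1) (fZ_simGen_mem_fE hE)

theorem gfDim_finite_implies_uniform_generation_with_feedback
    (U : Type) [Countable U] [Infinite U]
    (C : Set (Set U)) (hC : C.Countable) (hInf : ∀ L ∈ C, L.Infinite)
    (h : gfDim C ≠ ⊤) :
    UniformGenWithFeedback C :=
  gfDim_finite_implies_uniform_generation_with_feedback_general U C h
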